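/- Let l ≥ 1 and n ≥ 2 be integers, and let W be a word over the alphabet {1,…,l} that is not n-divisible. Consider any family of pairwise disjoint occurrences in W of subwords of the form zᵢ^{mᵢ}·vᵢ, where each zᵢ is a noncyclic word with 1 ≤ |zᵢ| ≤ n−1, each mᵢ > 2n, and each vᵢ is a word of the same length as zᵢ with vᵢ ≠ zᵢ. Then this family has fewer than 8(l+1)^n·n^6 members. -/

import Mathlib

/-- `u` is lexicographically greater than `v`: at the first position where they
differ, `u` has the larger letter (words where one is a prefix of the other are
incomparable). -/
def WordGt {α : Type*} [LinearOrder α] (u v : List α) : Prop :=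
  List.Lex (· < ·) v u ∧ ¬ v <+: u

/-- `wpow z k` is the concatenation of `k` copies of the word `z`. -/
def wpow {α : Type*} (z : List α) : ℕ → List α
  | 0 => []
  | k + 1 => z ++ wpow z k

/-- A word is noncyclic (primitive) if it is nonempty and is not a proper power. -/
def Noncyclic {α : Type*} (z : List α) : Prop :=
  z ≠ [] ∧ ∀ (v : List α) (k : ℕ), 2 ≤ k → z ≠ wpow v k

/-- `W` is `n`-divisible: `W = W₀W₁⋯Wₙ` with `W₁,…,Wₙ` nonempty and in strictly
decreasing lexicographic order. -/
def NDivisible {α : Type*} [LinearOrder α] (W : List α) (n : ℕ) : Prop :=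
  ∃ (W₀ : List α) (f : Fin n → List α),
    W = W₀ ++ (List.ofFn f).flatten ∧
    (∀ i, f i ≠ []) ∧
    (∀ i j, i < j → WordGt (f i) (f j))

/-- `W` is strongly `n`-divisible over the set of words `Z` (with boundary `2n`):
it is `n`-divisible with each `Wᵢ` (`1 ≤ i ≤ n`) beginning with `zᵢ^{2n}` for
pairwise distinct `z₁,…,zₙ ∈ Z`. -/
def StronglyNDivisible {α : Type*} [LinearOrder α] (W : List α) (n : ℕ)
    (Z : Set (List α)) : Prop :=
  ∃ (W₀ : List α) (f : Fin n → List α) (z : Fin n → List α),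
    W = W₀ ++ (List.ofFn f).flatten ∧
    (∀ i, f i ≠ []) ∧
    (∀ i j, i < j → WordGt (f i) (f j)) ∧
    (∀ i, z i ∈ Z ∧ wpow (z i) (2 * n) <+: f i) ∧
    Function.Injective z

/-- `u` occurs as a subword of `W` starting at position `p`. -/
def OccursAt {α : Type*} (W u : List α) (p : ℕ) : Prop :=
  ∃ pre suf : List α, pre.length = p ∧ W = pre ++ u ++ suf

/-!
Classify the occurrences by the word `z`, a word of length less than `n` hence one of at most
`(l+1)^n`, and by whether `v > z` or `v < z`. Among `2n(l+1)^n` occurrences, `n` of them share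
`z` and the sign; take them in order of position. Cutting `W` inside the `j`-th of them so that the
`j`-th block begins with `z^(c j) v j`, where `c j` increases with `j` if `v > z` and decreases if
`v < z`, makes the blocks strictly decreasing lexicographically, so `W` is `n`-divisible.
-/

section WordGt
variable {α : Type*} [LinearOrder α] {u v u' v' : List α}

theorem WordGt.of_prefix (h : WordGt u v) (hu : u <+: u') (hv : v <+: v') : WordGt u' v' := by
  obtain ⟨hlex, hnp⟩ := h
  obtain ⟨r, rfl⟩ := hu
  obtain ⟨s, rfl⟩ := hv
  induction hlex with
  | nil => exact absurd List.nil_prefix hnp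
  | cons hlex ih =>
    rw [List.cons_prefix_cons, not_and] at hnp
    obtain ⟨hlex', hnp'⟩ := ih (hnp rfl)
    exact ⟨List.Lex.cons hlex', by simpa using hnp'⟩
  | rel hab =>
    refine ⟨List.Lex.rel hab, fun hp => ?_⟩
    exact hab.ne (List.cons_prefix_cons.mp hp).1

theorem WordGt.append_left (h : WordGt u v) (a : List α) : WordGt (a ++ u) (a ++ v) :=
  ⟨List.Lex.append_left _ h.1 a, by simpa [List.prefix_append_right_inj] using h.2⟩

theorem wordGt_or_wordGt_of_length_eq (hlen : u.length = v.length) (hne : u ≠ v) :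
    WordGt u v ∨ WordGt v u := by
  have hnp : ∀ {x y : List α}, x.length = y.length → x ≠ y → ¬ x <+: y :=
    fun hxy hne hp => hne (hp.eq_of_length hxy)
  rcases trichotomous_of (List.Lex (· < ·)) u v with h | h | h
  · exact Or.inr ⟨h, hnp hlen hne⟩
  · exact absurd h hne
  · exact Or.inl ⟨h, hnp hlen.symm hne.symm⟩

end WordGt

section Wpow
variable {α : Type*} (z : List α)

theorem wpow_add (a b : ℕ) : wpow z (a + b) = wpow z a ++ wpow z b := by
  induction a with
  | zero => simp [wpow]
  | succ a ih => simp [Nat.succ_add, wpow, ih]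

theorem length_wpow (k : ℕ) : (wpow z k).length = k * z.length := by
  induction k with
  | zero => simp [wpow]
  | succ k ih => simp [wpow, ih, Nat.succ_mul, Nat.add_comm]

theorem wpow_append_prefix_wpow_append {a b : ℕ} (hab : a < b) (v : List α) :
    wpow z a ++ z <+: wpow z b ++ v := by
  obtain ⟨k, rfl⟩ := Nat.exists_eq_add_of_lt hab
  exact ⟨wpow z k ++ v, by rw [Nat.add_assoc, wpow_add]; simp [wpow]⟩

end Wpow

theorem OccursAt.prefix_drop {α : Type*} {W u : List α} {p : ℕ} (h : OccursAt W u p) :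
    u <+: W.drop p := by
  obtain ⟨pre, suf, rfl, rfl⟩ := h
  simp

theorem exists_blocks_of_prefix_drop {α : Type*} {n : ℕ} (W : List α) (u : Fin n → ℕ)
    (w : Fin n → List α) (hpre : ∀ j, w j <+: W.drop (u j))
    (hsep : ∀ j j', j < j' → u j + (w j).length ≤ u j') :
    ∃ (W₀ : List α) (f : Fin n → List α), W = W₀ ++ (List.ofFn f).flatten ∧ ∀ j, w j <+: f j := by
  induction n generalizing W with
  | zero => exact ⟨W, Fin.elim0, by simp, fun j => j.elim0⟩
  | succ n ih =>
    obtain ⟨W₀, f, hW, hf⟩ := ih (W.take (u (Fin.last n))) (u ∘ Fin.castSucc) (w ∘ Fin.castSucc)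
      (fun j => by
        rw [Function.comp_apply, List.drop_take, List.prefix_take_iff]
        have := hsep _ _ (Fin.castSucc_lt_last j)
        exact ⟨hpre _, by simp only [Function.comp_apply]; omega⟩)
      (fun j j' hjj' => hsep _ _ (Fin.castSucc_lt_castSucc_iff.mpr hjj'))
    refine ⟨W₀, Fin.snoc f (W.drop (u (Fin.last n))), ?_, Fin.lastCases ?_ fun j => ?_⟩
    · rw [List.ofFn_succ']
      simp only [Fin.snoc_castSucc, Fin.snoc_last, List.concat_eq_append, List.flatten_append,
        List.flatten_singleton, ← List.append_assoc, ← hW, List.take_append_drop]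
    · simpa using hpre (Fin.last n)
    · simpa using hf j

section Division
variable {α : Type*} [LinearOrder α]

theorem nDivisible_of_prefix_drop {n : ℕ} (W : List α) (u : Fin n → ℕ) (w : Fin n → List α)
    (hw : ∀ j, w j ≠ []) (hpre : ∀ j, w j <+: W.drop (u j))
    (hsep : ∀ j j', j < j' → u j + (w j).length ≤ u j')
    (hgt : ∀ j j', j < j' → WordGt (w j) (w j')) : NDivisible W n := by
  obtain ⟨W₀, f, hW, hf⟩ := exists_blocks_of_prefix_drop W u w hpre hsep
  exact ⟨W₀, f, hW, fun j => (hf j).ne_nil (hw j),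
    fun j j' hjj' => (hgt j j' hjj').of_prefix (hf j) (hf j')⟩

theorem nDivisible_of_wpow_occurrences {n : ℕ} (W z : List α) (hz : z ≠ []) (v : Fin n → List α)
    (m q : Fin n → ℕ) (hm : ∀ j, n ≤ m j + 1) (hv : ∀ j, (v j).length = z.length)
    (hocc : ∀ j, OccursAt W (wpow z (m j) ++ v j) (q j))
    (hsep : ∀ j j', j < j' → q j + (m j + 1) * z.length ≤ q j')
    (hcmp : (∀ j, WordGt (v j) z) ∨ ∀ j, WordGt z (v j)) : NDivisible W n := by
  obtain ⟨c, hcm, hgt⟩ : ∃ c : Fin n → ℕ, (∀ j, c j ≤ m j) ∧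
      ∀ j j', j < j' → WordGt (wpow z (c j) ++ v j) (wpow z (c j') ++ v j') := by
    -- block `j` will begin with `z^(c j) v j`; two such words first differ where one has `v`
    rcases hcmp with h | h
    · refine ⟨fun j => j, fun j => by have := hm j; have := j.isLt; dsimp only; omega,
        fun j j' hjj' => ?_⟩
      exact ((h j).append_left _).of_prefix (List.prefix_refl _)
        (wpow_append_prefix_wpow_append z hjj' _)
    · refine ⟨fun j => n - 1 - j, fun j => by have := hm j; dsimp only; omega,
        fun j j' hjj' => ?_⟩
      have hc : n - 1 - (j' : ℕ) < n - 1 - j := by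
        have := j'.isLt
        rw [Fin.lt_def] at hjj'
        omega
      exact ((h j').append_left _).of_prefix (wpow_append_prefix_wpow_append z hc _)
        (List.prefix_refl _)
  have hsplit : ∀ j, wpow z (m j) = wpow z (m j - c j) ++ wpow z (c j) := fun j => by
    rw [← wpow_add, Nat.sub_add_cancel (hcm j)]
  refine nDivisible_of_prefix_drop W (fun j => q j + (m j - c j) * z.length)
    (fun j => wpow z (c j) ++ v j) (fun j h => hz ?_) (fun j => ?_) (fun j j' hjj' => ?_) hgt
  · rw [← List.length_eq_zero_iff, ← hv j, (List.append_eq_nil_iff.mp h).2, List.length_nil]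
  · have := ((hocc j).prefix_drop).drop ((m j - c j) * z.length)
    rwa [hsplit j, List.append_assoc, List.drop_left' (length_wpow _ _),
      List.drop_drop] at this
  · have := hsep j j' hjj'
    have hmc : (m j - c j) * z.length + c j * z.length = m j * z.length := by
      rw [← Nat.add_mul, Nat.sub_add_cancel (hcm j)]
    simp only [List.length_append, length_wpow, hv j]
    nlinarith

theorem exists_strictMono_comp_of_le_card {ι : Type*} {n : ℕ} (S : Finset ι) (pos : ι → ℕ)
    (hpos : Set.InjOn pos S) (hn : n ≤ S.card) :
    ∃ g : Fin n → ι, (∀ j, g j ∈ S) ∧ StrictMono (pos ∘ g) := by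
  classical
  have hcard : n ≤ (S.image pos).card := by rwa [Finset.card_image_of_injOn hpos]
  let e := (S.image pos).orderEmbOfFin rfl
  choose g hgS hg using fun j : Fin n =>
    Finset.mem_image.mp ((S.image pos).orderEmbOfFin_mem rfl (Fin.castLE hcard j))
  refine ⟨g, hgS, fun j j' hjj' => ?_⟩
  simp only [Function.comp_apply, hg]
  exact e.strictMono (Fin.strictMono_castLE hcard hjj')

theorem exists_fiber_strictMono {ι β : Type*} [Fintype ι] [Fintype β] [DecidableEq β]
    [Nonempty β] (key : ι → β) (pos : ι → ℕ) (hpos : Function.Injective pos) {n : ℕ}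
    (hcard : Fintype.card β * n ≤ Fintype.card ι) :
    ∃ (b : β) (g : Fin n → ι), (∀ j, key (g j) = b) ∧ StrictMono (pos ∘ g) := by
  obtain ⟨b, hb⟩ := Fintype.exists_le_card_fiber_of_mul_le_card key hcard
  obtain ⟨g, hgS, hg⟩ := exists_strictMono_comp_of_le_card _ pos hpos.injOn hb
  exact ⟨b, g, fun j => (Finset.mem_filter.mp (hgS j)).2, hg⟩

theorem eq_of_getElem?_eq_of_length_le {α : Type*} {n : ℕ} {a b : List α} (ha : a.length ≤ n)
    (hb : b.length ≤ n) (h : ∀ j : Fin n, a[(j : ℕ)]? = b[(j : ℕ)]?) : a = b :=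
  List.ext_getElem? fun i => if hi : i < n then h ⟨i, hi⟩ else by
    rw [List.getElem?_eq_none (by omega), List.getElem?_eq_none (by omega)]

theorem nDivisible_of_disjoint_occurrences {α : Type*} [LinearOrder α] [Fintype α] {n N : ℕ}
    (W : List α) (z v : Fin N → List α) (m pos : Fin N → ℕ)
    (hz : ∀ i, z i ≠ [] ∧ (z i).length ≤ n) (hm : ∀ i, n ≤ m i + 1)
    (hv : ∀ i, (v i).length = (z i).length ∧ v i ≠ z i)
    (hocc : ∀ i, OccursAt W (wpow (z i) (m i) ++ v i) (pos i))
    (hdisj : ∀ i j, i ≠ j →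
      pos i + (wpow (z i) (m i) ++ v i).length ≤ pos j ∨
      pos j + (wpow (z j) (m j) ++ v j).length ≤ pos i)
    (hN : 2 * (Fintype.card α + 1) ^ n * n ≤ N) : NDivisible W n := by
  classical
  rcases Nat.eq_zero_or_pos n with rfl | hn
  · exact ⟨W, Fin.elim0, by simp, fun j => j.elim0, fun j => j.elim0⟩
  have hlen : ∀ i, (wpow (z i) (m i) ++ v i).length = (m i + 1) * (z i).length := fun i => by
    rw [List.length_append, length_wpow, (hv i).1, Nat.succ_mul]
  have hlen_pos : ∀ i, 0 < (wpow (z i) (m i) ++ v i).length := fun i => by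
    rw [hlen]; exact Nat.mul_pos (Nat.succ_pos _) (List.length_pos_iff.mpr (hz i).1)
  have hpos : Function.Injective pos := fun i j hij => by
    by_contra hne
    have := hlen_pos i
    have := hlen_pos j
    rcases hdisj i j hne with h | h <;> omega
  -- `z i` is recorded by its first `n` letters, `none` past its end
  let key : Fin N → (Fin n → Option α) × Bool := fun i =>
    (fun j => (z i)[(j : ℕ)]?, decide (WordGt (v i) (z i)))
  obtain ⟨⟨_, s⟩, g, hg, hmono⟩ := exists_fiber_strictMono key pos hpos (by
    simpa [Fintype.card_prod, Fintype.card_fun, Fintype.card_option, Nat.mul_comm] using hN)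
  set z₀ := z (g ⟨0, hn⟩)
  have hzg : ∀ j, z (g j) = z₀ := fun j =>
    eq_of_getElem?_eq_of_length_le (hz _).2 (hz _).2 fun k =>
      congrFun (congrArg Prod.fst ((hg j).trans (hg _).symm)) k
  have hsg : ∀ j, decide (WordGt (v (g j)) z₀) = s := fun j => by
    rw [← hzg j]; exact congrArg Prod.snd (hg j)
  refine nDivisible_of_wpow_occurrences W z₀ (hz _).1 (v ∘ g) (m ∘ g) (pos ∘ g) (fun j => hm _)
    (fun j => by simp [(hv _).1, hzg]) (fun j => hzg j ▸ hocc (g j)) (fun j j' hjj' => ?_) ?_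
  · have hlt := hmono hjj'
    have := hlen_pos (g j')
    rcases hdisj (g j) (g j') (fun h => hlt.ne (by simp [h])) with h | h
    · rwa [hlen, hzg] at h
    · simp only [Function.comp_apply] at hlt; omega
  · cases s
    · refine Or.inr fun j => ?_
      have hne : v (g j) ≠ z₀ := hzg j ▸ (hv (g j)).2
      have hl : (v (g j)).length = z₀.length := hzg j ▸ (hv (g j)).1
      exact (wordGt_or_wordGt_of_length_eq hl hne).resolve_left (by simpa using hsg j)
    · exact Or.inl fun j => by simpa using hsg j

theorem essential_height_bound_general (l n : ℕ)
    (W : List (Fin l)) (hndiv : ¬ NDivisible W n)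
    (N : ℕ) (z v : Fin N → List (Fin l)) (m : Fin N → ℕ) (pos : Fin N → ℕ)
    (hz : ∀ i, Noncyclic (z i) ∧ 1 ≤ (z i).length ∧ (z i).length ≤ n - 1)
    (hm : ∀ i, 2 * n < m i)
    (hv : ∀ i, (v i).length = (z i).length ∧ v i ≠ z i)
    (hocc : ∀ i, OccursAt W (wpow (z i) (m i) ++ v i) (pos i))
    (hdisj : ∀ i j, i ≠ j →
      pos i + (wpow (z i) (m i) ++ v i).length ≤ pos j ∨
      pos j + (wpow (z j) (m j) ++ v j).length ≤ pos i) :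
    N < 8 * (l + 1) ^ n * n ^ 6 := by
  by_contra! hN
  refine hndiv (nDivisible_of_disjoint_occurrences W z v m pos
    (fun i => ⟨(hz i).1.1, by have := (hz i).2.2; omega⟩) (fun i => by linarith [hm i])
    hv hocc hdisj ?_)
  calc 2 * (Fintype.card (Fin l) + 1) ^ n * n
      ≤ 8 * (l + 1) ^ n * n ^ 6 := by
        rw [Fintype.card_fin]
        gcongr
        · norm_num
        · exact Nat.le_self_pow (by norm_num) n
    _ ≤ N := hN

/-- If `W` over an `l`-letter alphabet (`l ≥ 1`, `n ≥ 2`) is not `n`-divisible,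
then any family of pairwise disjoint occurrences in `W` of subwords
`zᵢ^{mᵢ}·vᵢ`, where `zᵢ` is noncyclic with `1 ≤ |zᵢ| ≤ n−1`, `mᵢ > 2n`, and
`vᵢ` is a word of the same length as `zᵢ` with `vᵢ ≠ zᵢ`, has fewer than
`8(l+1)^n·n^6` members. -/
theorem essential_height_bound (l n : ℕ) (hl : 1 ≤ l) (hn : 2 ≤ n)
    (W : List (Fin l)) (hW : W ≠ []) (hndiv : ¬ NDivisible W n)
    (N : ℕ) (z v : Fin N → List (Fin l)) (m : Fin N → ℕ) (pos : Fin N → ℕ)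
    (hz : ∀ i, Noncyclic (z i) ∧ 1 ≤ (z i).length ∧ (z i).length ≤ n - 1)
    (hm : ∀ i, 2 * n < m i)
    (hv : ∀ i, (v i).length = (z i).length ∧ v i ≠ z i)
    (hocc : ∀ i, OccursAt W (wpow (z i) (m i) ++ v i) (pos i))
    (hdisj : ∀ i j, i ≠ j →
      pos i + (wpow (z i) (m i) ++ v i).length ≤ pos j ∨
      pos j + (wpow (z j) (m j) ++ v j).length ≤ pos i) :
    N < 8 * (l + 1) ^ n * n ^ 6 :=
  essential_height_bound_general l n W hndiv N z v m pos hz hm hv hocc hdisj
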